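/- arXiv:1810.12970 — 4 statements merged into one kernel-verified Lean document; each statement's English description precedes it below -/
import Mathlib

section
/- Let E and F be Banach spaces over 𝕜 (= ℝ or ℂ), let m, n, k ≥ 1 be natural numbers and let P ∈ 𝒫(^mE;F). Then for every q ∈ 𝒫(^kF) the map x ↦ (q(P(x)))^n belongs to 𝒫(^{mnk}E), and the map Δ_k^n P : 𝒫(^kF) → 𝒫(^{mnk}E) defined by (Δ_k^n P)(q)(x) = (q(P(x)))^n is a continuous n-homogeneous polynomial, i.e. Δ_k^n P ∈ 𝒫(^n 𝒫(^kF); 𝒫(^{mnk}E)). -/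
open scoped NNReal ENNReal

/-- `P : E → F` is a continuous `m`-homogeneous polynomial: it is generated by a
continuous `m`-linear map. -/
def IsHomPoly (𝕜 : Type*) [RCLike 𝕜] (m : ℕ) {E F : Type*}
    [NormedAddCommGroup E] [NormedSpace 𝕜 E] [NormedAddCommGroup F] [NormedSpace 𝕜 F]
    (P : E → F) : Prop :=
  ∃ A : ContinuousMultilinearMap 𝕜 (fun _ : Fin m => E) F, ∀ x, P x = A (fun _ => x)

/-- The sup norm over the closed unit ball. -/
noncomputable def polyNorm {E F : Type*} [Norm E] [Norm F] (P : E → F) : ℝ :=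
  sSup ((fun x => ‖P x‖) '' {x : E | ‖x‖ ≤ 1})

/-- The space `𝒫(^m E; F)` of continuous `m`-homogeneous polynomials. -/
structure HPoly (𝕜 : Type*) [RCLike 𝕜] (m : ℕ) (E F : Type*)
    [NormedAddCommGroup E] [NormedSpace 𝕜 E] [NormedAddCommGroup F] [NormedSpace 𝕜 F] where
  toFun : E → F
  isPoly' : IsHomPoly 𝕜 m toFun

namespace HPoly

variable {𝕜 : Type*} [RCLike 𝕜] {m : ℕ} {E F : Type*}
  [NormedAddCommGroup E] [NormedSpace 𝕜 E] [NormedAddCommGroup F] [NormedSpace 𝕜 F]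

instance : FunLike (HPoly 𝕜 m E F) E F where
  coe P := P.toFun
  coe_injective := by rintro ⟨f, hf⟩ ⟨g, hg⟩ h; simpa using h

@[ext] theorem ext {P Q : HPoly 𝕜 m E F} (h : ∀ x, P x = Q x) : P = Q := DFunLike.ext _ _ h

theorem isPoly (P : HPoly 𝕜 m E F) : IsHomPoly 𝕜 m ⇑P := P.isPoly'

instance : Zero (HPoly 𝕜 m E F) := ⟨⟨fun _ => 0, ⟨0, by simp⟩⟩⟩

@[simp] theorem zero_apply (x : E) : (0 : HPoly 𝕜 m E F) x = 0 := rfl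

instance : Add (HPoly 𝕜 m E F) :=
  ⟨fun P Q => ⟨fun x => P x + Q x, by
    obtain ⟨A, hA⟩ := P.isPoly'
    obtain ⟨B, hB⟩ := Q.isPoly'
    refine ⟨A + B, fun x => ?_⟩
    show P.toFun x + Q.toFun x = (A + B) fun _ => x
    rw [ContinuousMultilinearMap.add_apply, hA x, hB x]⟩⟩

@[simp] theorem add_apply (P Q : HPoly 𝕜 m E F) (x : E) : (P + Q) x = P x + Q x := rfl

instance : Neg (HPoly 𝕜 m E F) :=
  ⟨fun P => ⟨fun x => -P x, by
    obtain ⟨A, hA⟩ := P.isPoly'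
    refine ⟨-A, fun x => ?_⟩
    show -P.toFun x = (-A) fun _ => x
    rw [ContinuousMultilinearMap.neg_apply, hA x]⟩⟩

@[simp] theorem neg_apply (P : HPoly 𝕜 m E F) (x : E) : (-P) x = -P x := rfl

instance : SMul 𝕜 (HPoly 𝕜 m E F) :=
  ⟨fun c P => ⟨fun x => c • P x, by
    obtain ⟨A, hA⟩ := P.isPoly'
    refine ⟨c • A, fun x => ?_⟩
    show c • P.toFun x = (c • A) fun _ => x
    rw [ContinuousMultilinearMap.smul_apply, hA x]⟩⟩

@[simp] theorem smul_apply (c : 𝕜) (P : HPoly 𝕜 m E F) (x : E) : (c • P) x = c • P x := rfl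

instance : AddCommGroup (HPoly 𝕜 m E F) where
  add_assoc P Q R := by ext x; simp [add_assoc]
  zero_add P := by ext x; simp
  add_zero P := by ext x; simp
  add_comm P Q := by ext x; simp [add_comm]
  neg_add_cancel P := by ext x; simp
  nsmul := nsmulRec
  zsmul := zsmulRec

instance : Module 𝕜 (HPoly 𝕜 m E F) where
  one_smul P := by ext x; simp
  mul_smul a b P := by ext x; simp [mul_smul]
  smul_zero a := by ext x; simp
  smul_add a P Q := by ext x; simp
  add_smul a b P := by ext x; simp [add_smul]
  zero_smul P := by ext x; simp

theorem bddAbove_image (P : HPoly 𝕜 m E F) :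
    BddAbove ((fun x => ‖P x‖) '' {x : E | ‖x‖ ≤ 1}) := by
  obtain ⟨A, hA⟩ := P.isPoly'
  refine ⟨‖A‖, ?_⟩
  rintro r ⟨x, hx, rfl⟩
  show ‖P.toFun x‖ ≤ ‖A‖
  rw [hA x]
  calc ‖A fun _ => x‖ ≤ ‖A‖ * ∏ _i : Fin m, ‖x‖ := A.le_opNorm _
    _ ≤ ‖A‖ * 1 := by
        refine mul_le_mul_of_nonneg_left ?_ (norm_nonneg A)
        rw [Finset.prod_const]
        exact pow_le_one₀ (norm_nonneg x) hx
    _ = ‖A‖ := mul_one _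

theorem polyNorm_coe_nonneg (P : HPoly 𝕜 m E F) : 0 ≤ polyNorm ⇑P :=
  le_trans (norm_nonneg (P 0)) (le_csSup (bddAbove_image P) ⟨0, by simp, rfl⟩)

noncomputable instance : NormedAddCommGroup (HPoly 𝕜 m E F) :=
  AddGroupNorm.toNormedAddCommGroup
    { toFun := fun P => polyNorm (⇑P)
      map_zero' := by
        simp only [polyNorm]
        have h : (fun x : E => ‖(0 : HPoly 𝕜 m E F) x‖) '' {x : E | ‖x‖ ≤ 1} = {0} := by
          apply Set.eq_singleton_iff_nonempty_unique_mem.2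
          constructor
          · exact ⟨0, ⟨0, by simp, by simp⟩⟩
          · rintro r ⟨x, -, rfl⟩; simp
        rw [h, csSup_singleton]
      add_le' := fun P Q => by
        apply Real.sSup_le
        · rintro r ⟨x, hx, rfl⟩
          calc ‖(P + Q) x‖ ≤ ‖P x‖ + ‖Q x‖ := norm_add_le _ _
            _ ≤ polyNorm ⇑P + polyNorm ⇑Q :=
                add_le_add (le_csSup (bddAbove_image P) ⟨x, hx, rfl⟩)
                  (le_csSup (bddAbove_image Q) ⟨x, hx, rfl⟩)
        · exact add_nonneg (polyNorm_coe_nonneg P) (polyNorm_coe_nonneg Q)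
      neg' := fun P => by simp [polyNorm]
      eq_zero_of_map_eq_zero' := fun P h => by
        have h' : polyNorm ⇑P = 0 := h
        have hball : ∀ x : E, ‖x‖ ≤ 1 → P x = 0 := by
          intro x hx
          have h1 : ‖P x‖ ≤ polyNorm ⇑P := le_csSup (bddAbove_image P) ⟨x, hx, rfl⟩
          rw [h'] at h1
          exact norm_le_zero_iff.1 h1
        ext x
        rcases eq_or_ne x 0 with rfl | hx
        · simpa using hball 0 (by simp)
        · obtain ⟨A, hA⟩ := P.isPoly'
          set c : 𝕜 := ((‖x‖ : ℝ) : 𝕜) with hcdef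
          have hc : c ≠ 0 := by
            simp only [hcdef, ne_eq, RCLike.ofReal_eq_zero]
            exact norm_ne_zero_iff.2 hx
          have hu : ‖(c⁻¹ • x : E)‖ ≤ 1 := by
            rw [norm_smul, norm_inv, hcdef, RCLike.norm_ofReal,
              abs_of_nonneg (norm_nonneg x),
              inv_mul_cancel₀ (norm_ne_zero_iff.2 hx)]
          have h0 : P (c⁻¹ • x) = 0 := hball _ hu
          have key : P x = c ^ m • P (c⁻¹ • x) := by
            show P.toFun x = c ^ m • P.toFun (c⁻¹ • x)
            rw [hA x, hA (c⁻¹ • x)]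
            have h2 := A.map_smul_univ (fun _ : Fin m => c) (fun _ : Fin m => c⁻¹ • x)
            rw [Finset.prod_const] at h2
            have h3 : (fun _ : Fin m => c • c⁻¹ • x) = fun _ : Fin m => x := by
              funext i
              rw [smul_smul, mul_inv_cancel₀ hc, one_smul]
            rw [h3] at h2
            simpa using h2
          rw [key, h0, smul_zero]
          simp }

theorem norm_def (P : HPoly 𝕜 m E F) : ‖P‖ = polyNorm ⇑P := rfl

noncomputable instance : NormedSpace 𝕜 (HPoly 𝕜 m E F) :=
  { (inferInstance : Module 𝕜 (HPoly 𝕜 m E F)) with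
    norm_smul_le := fun c P => by
      show polyNorm ⇑(c • P) ≤ ‖c‖ * polyNorm ⇑P
      apply Real.sSup_le
      · rintro r ⟨x, hx, rfl⟩
        show ‖(c • P) x‖ ≤ _
        rw [smul_apply, norm_smul]
        exact mul_le_mul_of_nonneg_left
          (le_csSup (bddAbove_image P) ⟨x, hx, rfl⟩) (norm_nonneg c)
      · exact mul_nonneg (norm_nonneg c) (polyNorm_coe_nonneg P) }

end HPoly

/-!
If `q = B (y, …, y)` and `P = A (x, …, x)`, then `q ∘ P` is generated by the blockwise
composition `B (A (·), …, A (·))` in `k * m` variables, and a product of `n` polynomials of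
degree `d` by the product of their generating maps in `n * d` variables. The adjoint `Δₖⁿ P` is
the diagonal of the multilinear map `(q₁, …, qₙ) ↦ ∏ᵢ qᵢ ∘ P`, which is continuous since the sup
norm is submultiplicative and, by homogeneity, `‖q ∘ P‖ ≤ ‖P‖ ^ k * ‖q‖`.
-/

namespace ContinuousMultilinearMap

variable {𝕜 ι : Type*} [NontriviallyNormedField 𝕜] [Fintype ι] {β : ι → Type*}
  [∀ i, Fintype (β i)] {E G H : Type*}
  [NormedAddCommGroup E] [NormedSpace 𝕜 E] [NormedAddCommGroup G] [NormedSpace 𝕜 G]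
  [NormedAddCommGroup H] [NormedSpace 𝕜 H]

noncomputable def compMultilinearMap (g : ContinuousMultilinearMap 𝕜 (fun _ : ι => G) H)
    (f : (i : ι) → ContinuousMultilinearMap 𝕜 (fun _ : β i => E) G) :
    ContinuousMultilinearMap 𝕜 (fun _ : Σ i, β i => E) H :=
  (g.toMultilinearMap.compMultilinearMap fun i => (f i).toMultilinearMap).mkContinuous
    (‖g‖ * ∏ i, ‖f i‖) fun v =>
      calc ‖g fun i => f i fun b => v ⟨i, b⟩‖
          ≤ ‖g‖ * ∏ i, ‖f i fun b => v ⟨i, b⟩‖ := g.le_opNorm _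
        _ ≤ ‖g‖ * ∏ i, (‖f i‖ * ∏ b, ‖v ⟨i, b⟩‖) := by
            gcongr with i
            exact (f i).le_opNorm _
        _ = (‖g‖ * ∏ i, ‖f i‖) * ∏ σ, ‖v σ‖ := by
            rw [Fintype.prod_sigma, Finset.prod_mul_distrib, mul_assoc]

@[simp] theorem compMultilinearMap_apply
    (g : ContinuousMultilinearMap 𝕜 (fun _ : ι => G) H)
    (f : (i : ι) → ContinuousMultilinearMap 𝕜 (fun _ : β i => E) G) (v : (Σ i, β i) → E) :
    g.compMultilinearMap f v = g fun i => f i fun b => v ⟨i, b⟩ := rfl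

end ContinuousMultilinearMap

namespace IsHomPoly

variable {𝕜 : Type*} [RCLike 𝕜] {m : ℕ} {E F G : Type*}
  [NormedAddCommGroup E] [NormedSpace 𝕜 E] [NormedAddCommGroup F] [NormedSpace 𝕜 F]
  [NormedAddCommGroup G] [NormedSpace 𝕜 G]

theorem of_multilinear {ι : Type*} [Fintype ι] (hι : Fintype.card ι = m) {P : E → F}
    (A : ContinuousMultilinearMap 𝕜 (fun _ : ι => E) F) (hA : ∀ x, P x = A fun _ => x) :
    IsHomPoly 𝕜 m P :=
  ⟨A.domDomCongr (Fintype.equivFinOfCardEq hι), fun x => hA x⟩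

theorem map_smul {P : E → F} (hP : IsHomPoly 𝕜 m P) (c : 𝕜) (x : E) :
    P (c • x) = c ^ m • P x := by
  obtain ⟨A, hA⟩ := hP
  simpa [hA] using A.map_smul_univ (fun _ => c) fun _ => x

theorem comp {k : ℕ} {q : F → G} {P : E → F} (hq : IsHomPoly 𝕜 k q) (hP : IsHomPoly 𝕜 m P) :
    IsHomPoly 𝕜 (k * m) (q ∘ P) := by
  obtain ⟨B, hB⟩ := hq
  obtain ⟨A, hA⟩ := hP
  exact of_multilinear (by simp) (B.compMultilinearMap fun (_ : Fin k) => A)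
    fun x => by simp [hA, hB]

theorem prod {ι : Type*} [Fintype ι] {f : ι → E → 𝕜} (hf : ∀ i, IsHomPoly 𝕜 m (f i)) :
    IsHomPoly 𝕜 (Fintype.card ι * m) fun x => ∏ i, f i x := by
  choose A hA using hf
  exact of_multilinear (by simp)
    ((ContinuousMultilinearMap.mkPiAlgebra 𝕜 ι 𝕜).compMultilinearMap A) fun x => by simp [hA]

end IsHomPoly

namespace HPoly

open Function

variable {𝕜 : Type*} [RCLike 𝕜] {m : ℕ} {E F G : Type*}
  [NormedAddCommGroup E] [NormedSpace 𝕜 E] [NormedAddCommGroup F] [NormedSpace 𝕜 F]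
  [NormedAddCommGroup G] [NormedSpace 𝕜 G]

@[simp] theorem coe_mk (f : E → F) (hf : IsHomPoly 𝕜 m f) : ⇑(⟨f, hf⟩ : HPoly 𝕜 m E F) = f :=
  rfl

theorem norm_apply_le_of_norm_le_one (P : HPoly 𝕜 m E F) {x : E} (hx : ‖x‖ ≤ 1) :
    ‖P x‖ ≤ ‖P‖ :=
  le_csSup P.bddAbove_image ⟨x, hx, rfl⟩

theorem norm_le_of_forall_norm_le_one {P : HPoly 𝕜 m E F} {C : ℝ} (hC : 0 ≤ C)
    (h : ∀ x : E, ‖x‖ ≤ 1 → ‖P x‖ ≤ C) : ‖P‖ ≤ C :=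
  Real.sSup_le (by rintro _ ⟨x, hx, rfl⟩; exact h x hx) hC

theorem norm_apply_le (P : HPoly 𝕜 m E F) (x : E) : ‖P x‖ ≤ ‖P‖ * ‖x‖ ^ m := by
  set c : 𝕜 := (‖x‖ : 𝕜)
  -- for `x = 0` this is `0 = 0 • 0`, thanks to `0⁻¹ = 0`
  have hdecomp : x = c • c⁻¹ • x := by
    rcases eq_or_ne x 0 with rfl | hx
    · simp
    · rw [smul_inv_smul₀ (by simpa [c] using hx)]
  have hunit : ‖c⁻¹ • x‖ ≤ 1 := by
    rw [norm_smul, norm_inv, RCLike.norm_ofReal, abs_norm]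
    exact inv_mul_le_one
  calc ‖P x‖ = ‖x‖ ^ m * ‖P (c⁻¹ • x)‖ := by
        conv_lhs => rw [hdecomp, P.isPoly.map_smul]
        simp [c, norm_smul]
    _ ≤ ‖P‖ * ‖x‖ ^ m := by
        rw [mul_comm]
        gcongr
        exact P.norm_apply_le_of_norm_le_one hunit

noncomputable def precomp {k : ℕ} (P : HPoly 𝕜 m E F) :
    HPoly 𝕜 k F G →L[𝕜] HPoly 𝕜 (k * m) E G :=
  LinearMap.mkContinuous
    { toFun := fun q => ⟨q ∘ P, q.isPoly.comp P.isPoly⟩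
      map_add' := fun _ _ => rfl
      map_smul' := fun _ _ => rfl }
    (‖P‖ ^ k) fun q => norm_le_of_forall_norm_le_one (by positivity) fun x hx =>
      calc ‖q (P x)‖ ≤ ‖q‖ * ‖P x‖ ^ k := q.norm_apply_le _
        _ ≤ ‖q‖ * ‖P‖ ^ k := by gcongr; exact P.norm_apply_le_of_norm_le_one hx
        _ = ‖P‖ ^ k * ‖q‖ := mul_comm _ _

@[simp] theorem precomp_apply {k : ℕ} (P : HPoly 𝕜 m E F) (q : HPoly 𝕜 k F G) (x : E) :
    P.precomp q x = q (P x) := rfl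

/-- The degree `N` is a parameter so that the target type can be matched with any expression
for `card ι * m`. -/
noncomputable def prodMultilinear (ι : Type*) [Fintype ι] [DecidableEq ι] {N : ℕ}
    (hN : Fintype.card ι * m = N) :
    ContinuousMultilinearMap 𝕜 (fun _ : ι => HPoly 𝕜 m E 𝕜) (HPoly 𝕜 N E 𝕜) :=
  MultilinearMap.mkContinuous
    { toFun := fun p => ⟨fun x => ∏ i, p i x, hN ▸ IsHomPoly.prod fun i => (p i).isPoly⟩
      map_update_add' := fun p i a b => by
        ext x
        show ∏ j, update p i (a + b) j x = ∏ j, update p i a j x + ∏ j, update p i b j x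
        simp only [apply_update (fun _ (q : HPoly 𝕜 m E 𝕜) => q x), add_apply,
          Finset.prod_update_of_mem (Finset.mem_univ i), add_mul]
      map_update_smul' := fun p i c a => by
        ext x
        show ∏ j, update p i (c • a) j x = c • ∏ j, update p i a j x
        simp only [apply_update (fun _ (q : HPoly 𝕜 m E 𝕜) => q x), smul_apply,
          Finset.prod_update_of_mem (Finset.mem_univ i), smul_eq_mul, mul_assoc] }
    1 fun p => by
      rw [one_mul]
      refine norm_le_of_forall_norm_le_one (by positivity) fun x hx => ?_
      show ‖∏ i, p i x‖ ≤ ∏ i, ‖p i‖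
      rw [norm_prod]
      gcongr with i
      exact (p i).norm_apply_le_of_norm_le_one hx

@[simp] theorem prodMultilinear_apply (ι : Type*) [Fintype ι] [DecidableEq ι] {N : ℕ}
    (hN : Fintype.card ι * m = N) (p : ι → HPoly 𝕜 m E 𝕜) (x : E) :
    prodMultilinear ι hN p x = ∏ i, p i x := rfl

end HPoly

theorem statement0_general (𝕜 : Type*) [RCLike 𝕜] (E F : Type*)
    [NormedAddCommGroup E] [NormedSpace 𝕜 E]
    [NormedAddCommGroup F] [NormedSpace 𝕜 F]
    (m n k : ℕ)
    (P : E → F) (hP : IsHomPoly 𝕜 m P) :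
    (∀ q : F → 𝕜, IsHomPoly 𝕜 k q → IsHomPoly 𝕜 (m * n * k) fun x => q (P x) ^ n) ∧
    ∃ D : HPoly 𝕜 k F 𝕜 → HPoly 𝕜 (m * n * k) E 𝕜,
      (∀ (q : HPoly 𝕜 k F 𝕜) (x : E), D q x = q (P x) ^ n) ∧
      IsHomPoly 𝕜 n D := by
  let Δ : ContinuousMultilinearMap 𝕜 (fun _ : Fin n => HPoly 𝕜 k F 𝕜)
      (HPoly 𝕜 (m * n * k) E 𝕜) :=
    (HPoly.prodMultilinear (Fin n) (by simp only [Fintype.card_fin]; ring))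
      |>.compContinuousLinearMap fun _ => HPoly.precomp ⟨P, hP⟩
  have hΔ : ∀ (q : HPoly 𝕜 k F 𝕜) (x : E), Δ (fun _ => q) x = q (P x) ^ n := by
    simp [Δ]
  refine ⟨fun q hq => ?_, fun q => Δ fun _ => q, hΔ, Δ, fun _ => rfl⟩
  convert (Δ fun _ => ⟨q, hq⟩).isPoly using 1
  ext x
  simp [hΔ]

/-- For Banach spaces `E, F` over `𝕜 = ℝ` or `ℂ`, `m, n, k ≥ 1` and
`P ∈ 𝒫(^mE;F)`: for every `q ∈ 𝒫(^kF)` the map `x ↦ (q (P x))^n` belongs to `𝒫(^{mnk}E)`,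
and the generalized adjoint `Δₖⁿ P : 𝒫(^kF) → 𝒫(^{mnk}E)`, `(Δₖⁿ P) q x = (q (P x))^n`,
is a continuous `n`-homogeneous polynomial. -/
theorem statement0 (𝕜 : Type*) [RCLike 𝕜] (E F : Type*)
    [NormedAddCommGroup E] [NormedSpace 𝕜 E] [CompleteSpace E]
    [NormedAddCommGroup F] [NormedSpace 𝕜 F] [CompleteSpace F]
    (m n k : ℕ) (hm : 1 ≤ m) (hn : 1 ≤ n) (hk : 1 ≤ k)
    (P : E → F) (hP : IsHomPoly 𝕜 m P) :
    (∀ q : F → 𝕜, IsHomPoly 𝕜 k q → IsHomPoly 𝕜 (m * n * k) fun x => q (P x) ^ n) ∧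
    ∃ D : HPoly 𝕜 k F 𝕜 → HPoly 𝕜 (m * n * k) E 𝕜,
      (∀ (q : HPoly 𝕜 k F 𝕜) (x : E), D q x = q (P x) ^ n) ∧
      IsHomPoly 𝕜 n D :=
  statement0_general 𝕜 E F m n k P hP
end

section
/- Let E and F be Banach spaces over 𝕜 (= ℝ or ℂ) with E ≠ {0} and F ≠ {0}, and let m, n, k ≥ 1. Then Δ_k^n(P + Q) = Δ_k^n P + Δ_k^n Q holds for all P, Q ∈ 𝒫(^mE;F) if and only if k = n = 1. -/
open scoped NNReal ENNReal

/-! For `k = n = 1` the identity is additivity of the linear functional `q`. Otherwise take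
`P x = f(x)^m • y` and `q z = ψ(z)^k` with `f(x₀) ≠ 0`, `ψ(y) ≠ 0`: at `x₀`, with
`c = ψ(P x₀) ≠ 0`, the identity for `Q = P` reads `(2c)^(kn) = 2 c^(kn)`, forcing `kn = 1`. -/

section

variable {𝕜 : Type*} [RCLike 𝕜] {E F : Type*}
  [NormedAddCommGroup E] [NormedSpace 𝕜 E] [NormedAddCommGroup F] [NormedSpace 𝕜 F]

theorem isHomPoly_pow_smul (m : ℕ) (f : E →L[𝕜] 𝕜) (y : F) :
    IsHomPoly 𝕜 m (fun x => f x ^ m • y) :=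
  ⟨(ContinuousMultilinearMap.mkPiRing 𝕜 (Fin m) y).compContinuousLinearMap fun _ => f,
    fun x => by simp⟩

theorem IsHomPoly.map_add_of_one {q : E → F} (hq : IsHomPoly 𝕜 1 q) (z w : E) :
    q (z + w) = q z + q w := by
  obtain ⟨B, hB⟩ := hq
  have hlin : ∀ v, q v = continuousMultilinearCurryFin1 𝕜 E F B v := fun v => by
    rw [hB, continuousMultilinearCurryFin1_apply]
    congr
  simp only [hlin, map_add]

end

theorem eq_one_of_add_pow_eq_pow_add_pow {K : Type*} [CommRing K] [IsDomain K] [CharZero K]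
    {c : K} (hc : c ≠ 0) {N : ℕ} (h : (c + c) ^ N = c ^ N + c ^ N) : N = 1 := by
  rw [← two_mul, mul_pow, ← two_mul] at h
  have h2 : ((2 ^ N : ℕ) : K) = (2 : ℕ) := by
    exact_mod_cast mul_right_cancel₀ (pow_ne_zero N hc) h
  exact Nat.pow_right_injective le_rfl ((Nat.cast_injective h2).trans (pow_one 2).symm)

theorem statement5_general (𝕜 : Type*) [RCLike 𝕜] (E F : Type*)
    [NormedAddCommGroup E] [NormedSpace 𝕜 E] [Nontrivial E]
    [NormedAddCommGroup F] [NormedSpace 𝕜 F] [Nontrivial F]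
    (m n k : ℕ) :
    (∀ P Q : E → F, IsHomPoly 𝕜 m P → IsHomPoly 𝕜 m Q →
        ∀ q : F → 𝕜, IsHomPoly 𝕜 k q →
          ∀ x : E, q (P x + Q x) ^ n = q (P x) ^ n + q (Q x) ^ n) ↔
      k = 1 ∧ n = 1 := by
  constructor
  · intro h
    obtain ⟨x₀, hx₀⟩ := exists_ne (0 : E)
    obtain ⟨y, hy⟩ := exists_ne (0 : F)
    obtain ⟨f, hf⟩ := SeparatingDual.exists_ne_zero' (R := 𝕜) x₀ hx₀
    obtain ⟨ψ, hψ⟩ := SeparatingDual.exists_ne_zero' (R := 𝕜) y hy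
    have key := h _ _ (isHomPoly_pow_smul m f y) (isHomPoly_pow_smul m f y)
      _ (isHomPoly_pow_smul k ψ (1 : 𝕜)) x₀
    simp only [smul_eq_mul, mul_one, map_add, ← pow_mul] at key
    have hc : ψ (f x₀ ^ m • y) ≠ 0 := by
      rw [map_smul, smul_eq_mul]
      exact mul_ne_zero (pow_ne_zero m hf) hψ
    exact mul_eq_one.mp (eq_one_of_add_pow_eq_pow_add_pow hc key)
  · rintro ⟨rfl, rfl⟩ P Q - - q hq x
    simp only [pow_one, hq.map_add_of_one]

/-- For nontrivial Banach spaces `E, F` and `m, n, k ≥ 1`: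
`Δₖⁿ (P + Q) = Δₖⁿ P + Δₖⁿ Q` for all `P, Q ∈ 𝒫(^mE;F)` iff `k = n = 1`. -/
theorem statement5 (𝕜 : Type*) [RCLike 𝕜] (E F : Type*)
    [NormedAddCommGroup E] [NormedSpace 𝕜 E] [CompleteSpace E] [Nontrivial E]
    [NormedAddCommGroup F] [NormedSpace 𝕜 F] [CompleteSpace F] [Nontrivial F]
    (m n k : ℕ) (hm : 1 ≤ m) (hn : 1 ≤ n) (hk : 1 ≤ k) :
    (∀ P Q : E → F, IsHomPoly 𝕜 m P → IsHomPoly 𝕜 m Q →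
        ∀ q : F → 𝕜, IsHomPoly 𝕜 k q →
          ∀ x : E, q (P x + Q x) ^ n = q (P x) ^ n + q (Q x) ^ n) ↔
      k = 1 ∧ n = 1 :=
  statement5_general 𝕜 E F m n k
end

section
/- Let E and F be real Banach spaces, m, n, k ≥ 1 with kn odd. Then the correspondence P ∈ 𝒫(^mE;F) ↦ Δ_k^n P ∈ 𝒫(^n 𝒫(^kF); 𝒫(^{mnk}E)) is injective: if P₁, P₂ ∈ 𝒫(^mE;F) satisfy (q(P₁(x)))^n = (q(P₂(x)))^n for every q ∈ 𝒫(^kF) and every x ∈ E, then P₁ = P₂. -/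
/-! Testing with the polynomials `q = fᵏ`, `f ∈ F'`, gives `f (P₁ x) ^ (k n) = f (P₂ x) ^ (k n)`;
as `k n` is odd this forces `f (P₁ x) = f (P₂ x)`, and Hahn–Banach separates `P₁ x` from
`P₂ x` otherwise. -/

open scoped NNReal ENNReal

theorem IsHomPoly.pow_continuousLinearMap {𝕜 F : Type*} [RCLike 𝕜]
    [NormedAddCommGroup F] [NormedSpace 𝕜 F] (k : ℕ) (f : F →L[𝕜] 𝕜) :
    IsHomPoly 𝕜 k (fun y => f y ^ k) :=
  ⟨(ContinuousMultilinearMap.mkPiAlgebra 𝕜 (Fin k) 𝕜).compContinuousLinearMap (fun _ => f),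
    fun y => by simp⟩

theorem statement9_general (E F : Type*)
    [NormedAddCommGroup E] [NormedSpace ℝ E]
    [NormedAddCommGroup F] [NormedSpace ℝ F]
    (n k : ℕ) (hodd : Odd (k * n))
    (P₁ P₂ : E → F)
    (h : ∀ q : F → ℝ, IsHomPoly ℝ k q → ∀ x : E, q (P₁ x) ^ n = q (P₂ x) ^ n) :
    P₁ = P₂ := by
  funext x
  refine (SeparatingDual.eq_iff_forall_dual_eq (R := ℝ)).2 fun f => hodd.strictMono_pow.injective ?_
  simpa only [← pow_mul] using h _ (IsHomPoly.pow_continuousLinearMap k f) x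

/-- For real Banach spaces and `kn` odd, `P ↦ Δₖⁿ P` is injective. -/
theorem statement9 (E F : Type*)
    [NormedAddCommGroup E] [NormedSpace ℝ E] [CompleteSpace E]
    [NormedAddCommGroup F] [NormedSpace ℝ F] [CompleteSpace F]
    (m n k : ℕ) (hm : 1 ≤ m) (hn : 1 ≤ n) (hk : 1 ≤ k) (hodd : Odd (k * n))
    (P₁ P₂ : E → F) (h₁ : IsHomPoly ℝ m P₁) (h₂ : IsHomPoly ℝ m P₂)
    (h : ∀ q : F → ℝ, IsHomPoly ℝ k q → ∀ x : E, q (P₁ x) ^ n = q (P₂ x) ^ n) :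
    P₁ = P₂ :=
  statement9_general E F n k hodd P₁ P₂ h
end

section
/- Let 𝕜 = ℝ or ℂ and let d ≥ 1 be an odd natural number. The map R : ℓ_d → ℓ₁ defined by R((λ_j)_{j∈ℕ}) = (λ_j^d)_{j∈ℕ} is a well-defined surjective continuous d-homogeneous polynomial; in particular ‖R(λ)‖_{ℓ₁} = ‖λ‖_{ℓ_d}^d for every λ ∈ ℓ_d. -/
open scoped NNReal ENNReal

instance : Fact ((1 : ℝ≥0∞) ≤ 1) := ⟨le_refl _⟩

/-!
The coordinatewise product `(f₁, …, f_d) ↦ (∏ᵢ fᵢ j)ⱼ` is a `d`-linear map `ℓ_d × ⋯ × ℓ_d → ℓ₁` of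
norm at most `1`: for unit vectors, AM-GM gives `∏ᵢ |fᵢ j| ≤ (∑ᵢ |fᵢ j|^d) / d`, which sums over `j`
to `1` (a `d`-fold Hölder inequality). `R` is its diagonal, so `‖R f‖ = ∑ⱼ |f j|^d = ‖f‖^d`. Since
`d` is odd, every real or complex scalar has a `d`-th root, and taking roots coordinatewise turns an
`ℓ₁` sequence into an `ℓ_d` preimage under `R`.
-/

theorem Real.exists_pow_eq_of_odd {n : ℕ} (hn : Odd n) (c : ℝ) : ∃ r : ℝ, r ^ n = c := by
  have hn0 : n ≠ 0 := hn.pos.ne'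
  rcases le_total 0 c with hc | hc
  · exact ⟨c ^ (n⁻¹ : ℝ), Real.rpow_inv_natCast_pow hc hn0⟩
  · refine ⟨-(-c) ^ (n⁻¹ : ℝ), ?_⟩
    rw [hn.neg_pow, Real.rpow_inv_natCast_pow (neg_nonneg.mpr hc) hn0, neg_neg]

theorem RCLike.exists_pow_eq_of_odd {𝕜 : Type*} [RCLike 𝕜] {n : ℕ} (hn : Odd n) (a : 𝕜) :
    ∃ x : 𝕜, x ^ n = a := by
  rcases RCLike.I_eq_zero_or_im_I_eq_one (K := 𝕜) with h | h
  · let e := RCLike.realRingEquiv h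
    obtain ⟨r, hr⟩ := Real.exists_pow_eq_of_odd hn (e a)
    exact ⟨e.symm r, by rw [← map_pow, hr, e.symm_apply_apply]⟩
  · let e := RCLike.complexRingEquiv h
    obtain ⟨z, hz⟩ := IsAlgClosed.exists_pow_nat_eq (e a) hn.pos
    exact ⟨e.symm z, by rw [← map_pow, hz, e.symm_apply_apply]⟩

theorem Real.prod_le_sum_pow_div {n : ℕ} (hn : n ≠ 0) (b : Fin n → ℝ) (hb : ∀ i, 0 ≤ b i) :
    ∏ i, b i ≤ (∑ i, b i ^ n) / n := by
  have hn' : (n : ℝ) ≠ 0 := Nat.cast_ne_zero.mpr hn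
  calc ∏ i, b i = ∏ i, (b i ^ n) ^ (n⁻¹ : ℝ) :=
        Finset.prod_congr rfl fun i _ => (Real.pow_rpow_inv_natCast (hb i) hn).symm
    _ ≤ ∑ i, (n : ℝ)⁻¹ * b i ^ n :=
        Real.geom_mean_le_arith_mean_weighted _ _ _ (fun _ _ => by positivity)
          (by simp [mul_inv_cancel₀ hn']) (fun i _ => pow_nonneg (hb i) n)
    _ = (∑ i, b i ^ n) / n := by rw [← Finset.mul_sum, inv_mul_eq_div]

theorem MultilinearMap.norm_map_le_of_forall_norm_eq_one {𝕜 ι : Type*} [RCLike 𝕜] [Fintype ι]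
    {E : ι → Type*} [∀ i, NormedAddCommGroup (E i)] [∀ i, NormedSpace 𝕜 (E i)]
    {G : Type*} [SeminormedAddCommGroup G] [NormedSpace 𝕜 G] (f : MultilinearMap 𝕜 E G) {C : ℝ}
    (hf : ∀ m, (∀ i, ‖m i‖ = 1) → ‖f m‖ ≤ C) (m : ∀ i, E i) :
    ‖f m‖ ≤ C * ∏ i, ‖m i‖ := by
  by_cases! hm : ∃ i, m i = 0
  · obtain ⟨i, hi⟩ := hm
    rw [f.map_coord_zero i hi, Finset.prod_eq_zero (Finset.mem_univ i) (by simp [hi])]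
    simp
  have hpos : 0 < ∏ i, ‖m i‖ := Finset.prod_pos fun i _ => norm_pos_iff.mpr (hm i)
  have hunit := hf (fun i => (‖m i‖ : 𝕜)⁻¹ • m i) fun i => norm_smul_inv_norm (hm i)
  rw [f.map_smul_univ, norm_smul, norm_prod] at hunit
  simp only [norm_inv, RCLike.norm_ofReal, abs_norm] at hunit
  rw [Finset.prod_inv_distrib, inv_mul_le_iff₀ hpos, mul_comm] at hunit
  exact hunit

namespace lp

variable {𝕜 α : Type*} [RCLike 𝕜] {n : ℕ} {E : α → Type*} [∀ j, NormedAddCommGroup (E j)]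

theorem hasSum_norm_pow (hn : n ≠ 0) (f : lp E n) :
    HasSum (fun j => ‖f j‖ ^ n) (‖f‖ ^ n) := by
  have h := lp.hasSum_norm (by simpa [Nat.pos_iff_ne_zero] using hn) f
  simpa only [ENNReal.toReal_natCast, Real.rpow_natCast] using h

theorem hasSum_norm_one (f : lp E 1) : HasSum (fun j => ‖f j‖) ‖f‖ := by
  simpa using lp.hasSum_norm (by simp) f

theorem summable_prod_norm (hn : n ≠ 0) (f : Fin n → lp E n) :
    Summable fun j => ∏ i, ‖f i j‖ :=
  .of_nonneg_of_le (fun j => by positivity)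
    (fun j => Real.prod_le_sum_pow_div hn _ fun i => norm_nonneg _)
    ((summable_sum fun i _ => (hasSum_norm_pow hn (f i)).summable).div_const _)

theorem tsum_prod_norm_le (hn : n ≠ 0) (f : Fin n → lp E n) :
    ∑' j, ∏ i, ‖f i j‖ ≤ (∑ i, ‖f i‖ ^ n) / n := by
  have hsum : HasSum (fun j => (∑ i, ‖f i j‖ ^ n) / n) ((∑ i, ‖f i‖ ^ n) / n) :=
    (hasSum_sum fun i _ => hasSum_norm_pow hn (f i)).div_const _
  exact hasSum_le (fun j => Real.prod_le_sum_pow_div hn _ fun i => norm_nonneg _)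
    (summable_prod_norm hn f).hasSum hsum

variable (𝕜 α) in
noncomputable def prodMultilinear (hn : n ≠ 0) :
    MultilinearMap 𝕜 (fun _ : Fin n => lp (fun _ : α => 𝕜) n) (lp (fun _ : α => 𝕜) 1) :=
  let P : MultilinearMap 𝕜 (fun _ : Fin n => lp (fun _ : α => 𝕜) n) (α → 𝕜) :=
    MultilinearMap.pi fun j => (MultilinearMap.mkPiAlgebra 𝕜 (Fin n) 𝕜).compLinearMap
      fun _ => lp.evalₗ (fun _ : α => 𝕜) (n : ℝ≥0∞) j
  { toFun f := ⟨P f, memℓp_gen <| (summable_prod_norm hn f).congr fun j => by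
      rw [ENNReal.toReal_one, Real.rpow_one, ← norm_prod]; rfl⟩
    map_update_add' f k x y := Subtype.ext (P.map_update_add f k x y)
    map_update_smul' f k c x := Subtype.ext (P.map_update_smul f k c x) }

theorem prodMultilinear_apply (hn : n ≠ 0) (f : Fin n → lp (fun _ : α => 𝕜) n) (j : α) :
    prodMultilinear 𝕜 α hn f j = ∏ i, f i j := rfl

theorem norm_prodMultilinear_le [Fact (1 ≤ (n : ℝ≥0∞))] (hn : n ≠ 0)
    (f : Fin n → lp (fun _ : α => 𝕜) n) :
    ‖prodMultilinear 𝕜 α hn f‖ ≤ 1 * ∏ i, ‖f i‖ := by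
  refine MultilinearMap.norm_map_le_of_forall_norm_eq_one _ (fun g hg => ?_) f
  calc ‖prodMultilinear 𝕜 α hn g‖ = ∑' j, ∏ i, ‖g i j‖ := by
        simp only [← (hasSum_norm_one _).tsum_eq, prodMultilinear_apply, norm_prod]
    _ ≤ (∑ i, ‖g i‖ ^ n) / n := tsum_prod_norm_le hn g
    _ = 1 := by simp [hg, hn]

theorem prodMultilinear_diag_apply (hn : n ≠ 0) (f : lp (fun _ : α => 𝕜) n) (j : α) :
    prodMultilinear 𝕜 α hn (fun _ => f) j = f j ^ n := by
  rw [prodMultilinear_apply, Fin.prod_const]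

theorem norm_prodMultilinear_diag (hn : n ≠ 0) (f : lp (fun _ : α => 𝕜) n) :
    ‖prodMultilinear 𝕜 α hn (fun _ => f)‖ = ‖f‖ ^ n := by
  refine (hasSum_norm_one _).unique ?_
  simpa only [prodMultilinear_diag_apply, norm_pow] using hasSum_norm_pow hn f

theorem exists_pow_eq_of_odd (hn : Odd n) (g : lp (fun _ : α => 𝕜) 1) :
    ∃ f : lp (fun _ : α => 𝕜) n, ∀ j, f j ^ n = g j := by
  choose x hx using fun j => RCLike.exists_pow_eq_of_odd hn (g j)
  refine ⟨⟨x, memℓp_gen <| (hasSum_norm_one g).summable.congr fun j => ?_⟩, hx⟩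
  rw [ENNReal.toReal_natCast, Real.rpow_natCast, ← norm_pow, hx]

end lp

theorem statement16_general (𝕜 : Type*) [RCLike 𝕜] (d : ℕ) (hd : Odd d)
    [Fact (1 ≤ (d : ℝ≥0∞))] :
    ∃ R : lp (fun _ : ℕ => 𝕜) d → lp (fun _ : ℕ => 𝕜) 1,
      (∀ (f : lp (fun _ : ℕ => 𝕜) d) (j : ℕ), (R f : ∀ _ : ℕ, 𝕜) j = (f : ∀ _ : ℕ, 𝕜) j ^ d) ∧
      Function.Surjective R ∧
      IsHomPoly 𝕜 d R ∧
      ∀ f : lp (fun _ : ℕ => 𝕜) d, ‖R f‖ = ‖f‖ ^ d := by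
  have hd0 : d ≠ 0 := hd.pos.ne'
  let A := (lp.prodMultilinear 𝕜 ℕ hd0).mkContinuous 1 (lp.norm_prodMultilinear_le hd0)
  refine ⟨fun f => A fun _ => f, lp.prodMultilinear_diag_apply hd0, fun g => ?_, ⟨A, fun _ => rfl⟩,
    lp.norm_prodMultilinear_diag hd0⟩
  obtain ⟨f, hf⟩ := lp.exists_pow_eq_of_odd hd g
  exact ⟨f, lp.ext <| funext fun j => (lp.prodMultilinear_diag_apply hd0 f j).trans (hf j)⟩

/-- For odd `d ≥ 1`, the map `R : ℓ_d → ℓ₁`, `R (λ_j)_j = (λ_j^d)_j`, is a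
well-defined surjective continuous `d`-homogeneous polynomial with `‖R λ‖ = ‖λ‖^d`. -/
theorem statement16 (𝕜 : Type*) [RCLike 𝕜] (d : ℕ) (hd : Odd d) (hd1 : 1 ≤ d)
    [Fact (1 ≤ (d : ℝ≥0∞))] :
    ∃ R : lp (fun _ : ℕ => 𝕜) d → lp (fun _ : ℕ => 𝕜) 1,
      (∀ (f : lp (fun _ : ℕ => 𝕜) d) (j : ℕ), (R f : ∀ _ : ℕ, 𝕜) j = (f : ∀ _ : ℕ, 𝕜) j ^ d) ∧
      Function.Surjective R ∧
      IsHomPoly 𝕜 d R ∧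
      ∀ f : lp (fun _ : ℕ => 𝕜) d, ‖R f‖ = ‖f‖ ^ d :=
  statement16_general 𝕜 d hd
end
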